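/- Suppose d ≥ 1, c·(m+1) ≠ d·(n+1) (i.e. s₃ ≠ s₂), and moreover a = 0 or a·(m+1) ≠ d·(n+1) (i.e. s₃ ≠ s₁ when s₁ is defined). Then lim_{s→s₃} (s−s₃)·Z_{n,m}(s) = 1/(d·(n+1) − c·(m+1)), which is nonzero; consequently s₃ = −(m+1)/d is a pole of order exactly one of Z_{n,m}. -/

import Mathlib

/-!
Writing `d·s + m + 1 = d·(s - s₃)`, the zeta function splits as
`Z s = g s + h s / (s - s₃)` with `g` and `h` continuous at `s₃`: the hypotheses say exactly that
the other two linear factors of the denominators do not vanish at `s₃`. Hence `(s - s₃)·Z s → h s₃`,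
and `h s₃ = 1 / (d(n+1) - c(m+1))`. A nonzero limit at order one rules out every other order.
-/

/-- The local topological zeta function of the monomial ideal
`I = (x^a y^b, x^c y^d) ⊆ ℂ[x,y]` with respect to the volume form
`x^n y^m dx ∧ dy`, as a function `ℚ → ℚ`. -/
noncomputable def Z (a b c d n m : ℕ) (s : ℚ) : ℚ :=
  ((c : ℚ) - a) /
      (((a : ℚ) * s + n + 1) *
        (((b : ℚ) * c - (a : ℚ) * d) * s + ((b : ℚ) - d) * (n + 1) + ((c : ℚ) - a) * (m + 1))) +
    ((b : ℚ) - d) /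
      ((((b : ℚ) * c - (a : ℚ) * d) * s + ((b : ℚ) - d) * (n + 1) + ((c : ℚ) - a) * (m + 1)) *
        ((d : ℚ) * s + m + 1))

/-- `s₀` is a pole of order `k` of `Z` if `lim_{s → s₀} (s - s₀)^k * Z s`
exists and is nonzero. -/
def IsPoleOfOrder (Z : ℚ → ℚ) (s₀ : ℚ) (k : ℕ) : Prop :=
  ∃ L : ℚ, L ≠ 0 ∧
    Filter.Tendsto (fun s => (s - s₀) ^ k * Z s) (nhdsWithin s₀ {s₀}ᶜ) (nhds L)

/-- `s₀` is a pole of `Z` if it is a pole of some order `k ≥ 1`. -/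
def IsPole (Z : ℚ → ℚ) (s₀ : ℚ) : Prop :=
  ∃ k : ℕ, 1 ≤ k ∧ IsPoleOfOrder Z s₀ k

open Filter Topology

theorem IsPoleOfOrder.not_of_lt {f : ℚ → ℚ} {s₀ : ℚ} {j k : ℕ} (hj : IsPoleOfOrder f s₀ j)
    (hjk : j < k) : ¬ IsPoleOfOrder f s₀ k := by
  rintro ⟨L', hL', hk⟩
  obtain ⟨L, -, hj⟩ := hj
  have hpow : Tendsto (fun s => (s - s₀) ^ (k - j)) (𝓝[≠] s₀) (𝓝 0) := by
    have hcont : ContinuousAt (fun s : ℚ => (s - s₀) ^ (k - j)) s₀ := by fun_prop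
    simpa [zero_pow (Nat.sub_ne_zero_of_lt hjk)] using hcont.continuousWithinAt.tendsto
  have hzero : Tendsto (fun s => (s - s₀) ^ k * f s) (𝓝[≠] s₀) (𝓝 0) := by
    have := hpow.mul hj
    rw [zero_mul] at this
    refine this.congr fun s => ?_
    rw [← mul_assoc, ← pow_add, Nat.sub_add_cancel hjk.le]
  exact hL' (tendsto_nhds_unique hk hzero)

theorem IsPoleOfOrder.unique {f : ℚ → ℚ} {s₀ : ℚ} {j k : ℕ} (hj : IsPoleOfOrder f s₀ j)
    (hk : IsPoleOfOrder f s₀ k) : j = k := by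
  rcases lt_trichotomy j k with hjk | rfl | hkj
  · exact absurd hk (hj.not_of_lt hjk)
  · rfl
  · exact absurd hj (hk.not_of_lt hkj)

theorem tendsto_sub_mul_of_eq_add_div {𝕜 : Type*} [NormedField 𝕜] {f g h : 𝕜 → 𝕜} {s₀ : 𝕜}
    (hf : ∀ s, s ≠ s₀ → f s = g s + h s / (s - s₀)) (hg : ContinuousAt g s₀)
    (hh : ContinuousAt h s₀) : Tendsto (fun s => (s - s₀) * f s) (𝓝[≠] s₀) (𝓝 (h s₀)) := by
  have hlim : Tendsto (fun s => (s - s₀) * g s + h s) (𝓝[≠] s₀) (𝓝 (h s₀)) := by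
    have hcont : ContinuousAt (fun s => (s - s₀) * g s + h s) s₀ := by fun_prop
    simpa using hcont.continuousWithinAt.tendsto
  refine hlim.congr' ?_
  filter_upwards [self_mem_nhdsWithin] with s hs
  rw [hf s hs, mul_add, mul_div_cancel₀ _ (sub_ne_zero.mpr hs)]

namespace Z

/-- The linear factor of `Z` vanishing at `s₂`. -/
def factor₂ (a b c d n m : ℕ) (s : ℚ) : ℚ :=
  ((b : ℚ) * c - (a : ℚ) * d) * s + ((b : ℚ) - d) * (n + 1) + ((c : ℚ) - a) * (m + 1)

variable {a b c d n m : ℕ}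

@[fun_prop]
theorem continuous_factor₂ : Continuous (factor₂ a b c d n m) := by
  unfold factor₂
  fun_prop

/-- Valid at every `s`, zeros of the denominators included, as `x / 0 = 0` on both sides. -/
theorem eq_add_div_sub (hd : (d : ℚ) ≠ 0) (s : ℚ) :
    Z a b c d n m s = ((c : ℚ) - a) / (((a : ℚ) * s + n + 1) * factor₂ a b c d n m s) +
      ((b : ℚ) - d) / (d * factor₂ a b c d n m s) / (s - (-((m : ℚ) + 1) / d)) := by
  have hfactor₃ : (d : ℚ) * s + m + 1 = d * (s - (-((m : ℚ) + 1) / d)) := by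
    field_simp
    ring
  rw [Z, ← factor₂, hfactor₃, div_div, mul_assoc, mul_left_comm]

theorem mul_factor₂_eq (hd : (d : ℚ) ≠ 0) :
    d * factor₂ a b c d n m (-((m : ℚ) + 1) / d) =
      ((b : ℚ) - d) * ((d : ℚ) * (n + 1) - (c : ℚ) * (m + 1)) := by
  rw [factor₂]
  field_simp
  ring

theorem factor₁_ne_zero (hd : (d : ℚ) ≠ 0) (ha : a = 0 ∨ a * (m + 1) ≠ d * (n + 1)) :
    (a : ℚ) * (-((m : ℚ) + 1) / d) + n + 1 ≠ 0 := by
  rcases ha with rfl | ha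
  · simp only [Nat.cast_zero, zero_mul, zero_add]
    positivity
  · intro h
    apply ha
    field_simp at h
    exact_mod_cast (by linarith : (a : ℚ) * (m + 1) = d * (n + 1))

end Z

theorem stmt5_general (a b c d n m : ℕ) (hdb : d < b) (hd : 1 ≤ d)
    (h32 : c * (m + 1) ≠ d * (n + 1))
    (h31 : a = 0 ∨ a * (m + 1) ≠ d * (n + 1)) :
    Filter.Tendsto (fun s => (s - (-((m : ℚ) + 1) / d)) * Z a b c d n m s)
        (nhdsWithin (-((m : ℚ) + 1) / d) {(-((m : ℚ) + 1) / d)}ᶜ)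
        (nhds (1 / ((d : ℚ) * (n + 1) - (c : ℚ) * (m + 1)))) ∧
      1 / ((d : ℚ) * (n + 1) - (c : ℚ) * (m + 1)) ≠ 0 ∧
      IsPoleOfOrder (Z a b c d n m) (-((m : ℚ) + 1) / d) 1 ∧
      ∀ k : ℕ, 1 ≤ k → k ≠ 1 → ¬ IsPoleOfOrder (Z a b c d n m) (-((m : ℚ) + 1) / d) k := by
  have hd₀ : (d : ℚ) ≠ 0 := by positivity
  have hbd : (b : ℚ) - d ≠ 0 := sub_ne_zero.mpr (by exact_mod_cast hdb.ne')
  have hD : (d : ℚ) * (n + 1) - (c : ℚ) * (m + 1) ≠ 0 :=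
    sub_ne_zero.mpr (by exact_mod_cast h32.symm)
  have hfactor₂ : Z.factor₂ a b c d n m (-((m : ℚ) + 1) / d) ≠ 0 :=
    right_ne_zero_of_mul (by rw [Z.mul_factor₂_eq hd₀]; exact mul_ne_zero hbd hD)
  have hres := tendsto_sub_mul_of_eq_add_div (fun s _ => Z.eq_add_div_sub hd₀ s)
    (ContinuousAt.div (by fun_prop) (by fun_prop)
      (mul_ne_zero (Z.factor₁_ne_zero hd₀ h31) hfactor₂))
    (ContinuousAt.div (by fun_prop) (by fun_prop) (mul_ne_zero hd₀ hfactor₂))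
  rw [Z.mul_factor₂_eq hd₀, div_mul_cancel_left₀ hbd, ← one_div] at hres
  have hpole : IsPoleOfOrder (Z a b c d n m) (-((m : ℚ) + 1) / d) 1 :=
    ⟨_, one_div_ne_zero hD, by simpa only [pow_one] using hres⟩
  exact ⟨hres, one_div_ne_zero hD, hpole, fun k _ hk hk' => hk (hk'.unique hpole)⟩

theorem stmt5 (a b c d n m : ℕ) (hac : a < c) (hdb : d < b) (hd : 1 ≤ d)
    (h32 : c * (m + 1) ≠ d * (n + 1))
    (h31 : a = 0 ∨ a * (m + 1) ≠ d * (n + 1)) :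
    Filter.Tendsto (fun s => (s - (-((m : ℚ) + 1) / d)) * Z a b c d n m s)
        (nhdsWithin (-((m : ℚ) + 1) / d) {(-((m : ℚ) + 1) / d)}ᶜ)
        (nhds (1 / ((d : ℚ) * (n + 1) - (c : ℚ) * (m + 1)))) ∧
      1 / ((d : ℚ) * (n + 1) - (c : ℚ) * (m + 1)) ≠ 0 ∧
      IsPoleOfOrder (Z a b c d n m) (-((m : ℚ) + 1) / d) 1 ∧
      ∀ k : ℕ, 1 ≤ k → k ≠ 1 → ¬ IsPoleOfOrder (Z a b c d n m) (-((m : ℚ) + 1) / d) k :=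
  stmt5_general a b c d n m hdb hd h32 h31
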